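/- arXiv:1010.1950 — 3 statements merged into one kernel-verified Lean document; each statement's English description precedes it below -/
import Mathlib

section
/- Let P ⊂ [0,1)² have N points, let j ∈ ℕ₀² and m ∈ D_j be such that no point of P lies in the interior of the dyadic rectangle I_{j,m}. Then the Haar coefficient of the discrepancy function satisfies μ_{j,m}(D_P) = −N·2^{-2j₁-2j₂-4}. -/
open MeasureTheory

/-- The L∞-normalized Haar function `h_{j,m}` on `[0,1)`. -/
noncomputable def haar1 (j m : ℕ) (x : ℝ) : ℝ :=
  if (m : ℝ) / 2 ^ j ≤ x ∧ x < ((m : ℝ) + 1 / 2) / 2 ^ j then 1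
  else if ((m : ℝ) + 1 / 2) / 2 ^ j ≤ x ∧ x < ((m : ℝ) + 1) / 2 ^ j then -1
  else 0

/-- The discrepancy function of an `N`-point set `P ⊂ [0,1)²`. -/
noncomputable def discrepancy2 (N : ℕ) (P : Finset (ℝ × ℝ)) (x : ℝ × ℝ) : ℝ :=
  (∑ z ∈ P, (Set.Ioo z.1 1 ×ˢ Set.Ioo z.2 1).indicator (fun _ => (1 : ℝ)) x) -
    N * (x.1 * x.2)

/-!
The discrepancy function splits into the counting part, a sum over `z ∈ P` of products
`1_{(z₁,1)}(x₁) · 1_{(z₂,1)}(x₂)`, and the linear part `N x₁ x₂`; the Haar function is a product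
too, so every coefficient factors into one-dimensional integrals. If `z` is not in the interior
of `I_{j,m}`, then in one coordinate, say the first, `z₁` lies outside the open dyadic interval,
so `1_{(z₁,1)}` is constant on the support of `h_{j₁,m₁}`, and the Haar function has mean zero.
What remains is `-N ∏ᵢ ∫ xᵢ h_{jᵢ,mᵢ}(xᵢ) dxᵢ`, and each first moment is `-2^{-2jᵢ-2}`.
-/

open Set

section Haar

variable {j m : ℕ}

lemma mul_haar1_eq_indicator_sub (g : ℝ → ℝ) (j m : ℕ) (x : ℝ) :
    g x * haar1 j m x =
      (Ico ((m : ℝ) / 2 ^ j) (((m : ℝ) + 1 / 2) / 2 ^ j)).indicator g x -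
        (Ico (((m : ℝ) + 1 / 2) / 2 ^ j) (((m : ℝ) + 1) / 2 ^ j)).indicator g x := by
  simp only [haar1, indicator_apply, mem_Ico]
  split_ifs with h₁ h₂ <;> first | linarith [h₁.2, h₂.1] | ring

lemma dyadic_left_le_mid (j m : ℕ) : (m : ℝ) / 2 ^ j ≤ ((m : ℝ) + 1 / 2) / 2 ^ j := by
  gcongr; norm_num

lemma dyadic_mid_le_right (j m : ℕ) : ((m : ℝ) + 1 / 2) / 2 ^ j ≤ ((m : ℝ) + 1) / 2 ^ j := by
  gcongr; norm_num

lemma dyadic_right_le_one (hm : m < 2 ^ j) : ((m : ℝ) + 1) / 2 ^ j ≤ 1 :=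
  div_le_one_of_le₀ (by exact_mod_cast Nat.succ_le_of_lt hm) (by positivity)

lemma IntegrableOn.mul_haar1 {g : ℝ → ℝ} (hg : IntegrableOn g (Ico 0 1)) :
    IntegrableOn (fun x => g x * haar1 j m x) (Ico 0 1) := by
  simp_rw [mul_haar1_eq_indicator_sub]
  exact (hg.indicator measurableSet_Ico).sub (hg.indicator measurableSet_Ico)

lemma setIntegral_mul_haar1 (hm : m < 2 ^ j) {g : ℝ → ℝ} (hg : IntegrableOn g (Ico 0 1)) :
    ∫ x in Ico (0 : ℝ) 1, g x * haar1 j m x =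
      (∫ x in Ioo ((m : ℝ) / 2 ^ j) (((m : ℝ) + 1 / 2) / 2 ^ j), g x) -
        ∫ x in Ioo (((m : ℝ) + 1 / 2) / 2 ^ j) (((m : ℝ) + 1) / 2 ^ j), g x := by
  have hsub : Ico ((m : ℝ) / 2 ^ j) (((m : ℝ) + 1) / 2 ^ j) ⊆ Ico 0 1 :=
    Ico_subset_Ico (by positivity) (dyadic_right_le_one hm)
  simp_rw [mul_haar1_eq_indicator_sub]
  rw [integral_sub (hg.indicator measurableSet_Ico) (hg.indicator measurableSet_Ico),
    setIntegral_indicator measurableSet_Ico, setIntegral_indicator measurableSet_Ico,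
    inter_eq_right.2 ((Ico_subset_Ico_right (dyadic_mid_le_right j m)).trans hsub),
    inter_eq_right.2 ((Ico_subset_Ico_left (dyadic_left_le_mid j m)).trans hsub),
    integral_Ico_eq_integral_Ioo, integral_Ico_eq_integral_Ioo]

lemma integrableOn_indicator_Ioo_mul_haar1 (j m : ℕ) (a : ℝ) :
    IntegrableOn (fun x => (Ioo a 1).indicator (fun _ => (1 : ℝ)) x * haar1 j m x) (Ico 0 1) :=
  IntegrableOn.mul_haar1 ((integrable_const (1 : ℝ)).indicator measurableSet_Ioo)

lemma integrableOn_id_mul_haar1 (j m : ℕ) :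
    IntegrableOn (fun x : ℝ => x * haar1 j m x) (Ico 0 1) :=
  IntegrableOn.mul_haar1 (continuous_id.integrableOn_Icc.mono_set Ico_subset_Icc_self)

lemma setIntegral_indicator_Ioo_mul_haar1 (hm : m < 2 ^ j) {a : ℝ}
    (ha : a ∉ Ioo ((m : ℝ) / 2 ^ j) (((m : ℝ) + 1) / 2 ^ j)) :
    ∫ x in Ico (0 : ℝ) 1, (Ioo a 1).indicator (fun _ => (1 : ℝ)) x * haar1 j m x = 0 := by
  have hl := dyadic_left_le_mid j m
  have hc := dyadic_mid_le_right j m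
  have hr := dyadic_right_le_one hm
  rw [setIntegral_mul_haar1 hm ((integrable_const (1 : ℝ)).indicator measurableSet_Ioo)]
  rcases le_or_gt a ((m : ℝ) / 2 ^ j) with hal | hla
  · -- the indicator is `1` on the support of the Haar function, which has mean zero
    have hone : ∀ u v : ℝ, a ≤ u → v ≤ 1 →
        ∫ x in Ioo u v, (Ioo a 1).indicator (fun _ => (1 : ℝ)) x = ∫ _ in Ioo u v, (1 : ℝ) :=
      fun u v hau hv1 => setIntegral_congr_fun measurableSet_Ioo fun x hx =>
        indicator_of_mem (mem_Ioo.2 ⟨hau.trans_lt hx.1, hx.2.trans_le hv1⟩) _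
    rw [hone _ _ hal (hc.trans hr), hone _ _ (hal.trans hl) hr, setIntegral_const,
      setIntegral_const, Real.volume_real_Ioo_of_le hl, Real.volume_real_Ioo_of_le hc]
    ring
  · have har : ((m : ℝ) + 1) / 2 ^ j ≤ a := by
      by_contra! h
      exact ha ⟨hla, h⟩
    have hzero : ∀ u v : ℝ, v ≤ a →
        ∫ x in Ioo u v, (Ioo a 1).indicator (fun _ => (1 : ℝ)) x = 0 :=
      fun u v hva => setIntegral_eq_zero_of_forall_eq_zero fun x hx =>
        indicator_of_notMem (fun hx' => (hx.2.trans_le hva).not_gt hx'.1) _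
    rw [hzero _ _ (hc.trans har), hzero _ _ har, sub_zero]

lemma setIntegral_id_mul_haar1 (hm : m < 2 ^ j) :
    ∫ x in Ico (0 : ℝ) 1, x * haar1 j m x = -(2 : ℝ) ^ (-2 * (j : ℤ) - 2) := by
  rw [setIntegral_mul_haar1 hm (g := fun x => x)
      (continuous_id.integrableOn_Icc.mono_set Ico_subset_Icc_self),
    ← integral_Ioc_eq_integral_Ioo, ← integral_Ioc_eq_integral_Ioo,
    ← intervalIntegral.integral_of_le (dyadic_left_le_mid j m),
    ← intervalIntegral.integral_of_le (dyadic_mid_le_right j m),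
    integral_id, integral_id,
    show -2 * (j : ℤ) - 2 = -((2 * j + 2 : ℕ) : ℤ) by push_cast; ring, zpow_neg, zpow_natCast,
    pow_add, pow_mul']
  field_simp
  ring

end Haar

lemma integral_indicator_Ioo_mul_haar1_prod_eq_zero {j₁ j₂ m₁ m₂ : ℕ} (hm₁ : m₁ < 2 ^ j₁)
    (hm₂ : m₂ < 2 ^ j₂) {z : ℝ × ℝ}
    (hz : z ∉ Ioo ((m₁ : ℝ) / 2 ^ j₁) (((m₁ : ℝ) + 1) / 2 ^ j₁) ×ˢ
      Ioo ((m₂ : ℝ) / 2 ^ j₂) (((m₂ : ℝ) + 1) / 2 ^ j₂)) :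
    ∫ x : ℝ × ℝ, ((Ioo z.1 1).indicator (fun _ => (1 : ℝ)) x.1 * haar1 j₁ m₁ x.1) *
        ((Ioo z.2 1).indicator (fun _ => (1 : ℝ)) x.2 * haar1 j₂ m₂ x.2)
      ∂(volume.restrict (Ico 0 1)).prod (volume.restrict (Ico 0 1)) = 0 := by
  rw [integral_prod_mul (fun x => (Ioo z.1 1).indicator (fun _ => (1 : ℝ)) x * haar1 j₁ m₁ x)
    (fun y => (Ioo z.2 1).indicator (fun _ => (1 : ℝ)) y * haar1 j₂ m₂ y)]
  by_cases h₁ : z.1 ∈ Ioo ((m₁ : ℝ) / 2 ^ j₁) (((m₁ : ℝ) + 1) / 2 ^ j₁)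
  · rw [setIntegral_indicator_Ioo_mul_haar1 hm₂ fun h₂ => hz ⟨h₁, h₂⟩, mul_zero]
  · rw [setIntegral_indicator_Ioo_mul_haar1 hm₁ h₁, zero_mul]

lemma discrepancy2_mul_prod (N : ℕ) (P : Finset (ℝ × ℝ)) (u v : ℝ → ℝ) (x : ℝ × ℝ) :
    discrepancy2 N P x * (u x.1 * v x.2) =
      (∑ z ∈ P, ((Ioo z.1 1).indicator (fun _ => (1 : ℝ)) x.1 * u x.1) *
          ((Ioo z.2 1).indicator (fun _ => (1 : ℝ)) x.2 * v x.2)) -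
        N * ((x.1 * u x.1) * (x.2 * v x.2)) := by
  rw [discrepancy2, sub_mul, Finset.sum_mul]
  congr 1
  · refine Finset.sum_congr rfl fun z _ => ?_
    simp only [indicator_apply, mem_prod]
    split_ifs <;> simp_all
  · ring

theorem haar_coefficient_discrepancy_empty_box_general (N : ℕ) (P : Finset (ℝ × ℝ))
    (j₁ j₂ m₁ m₂ : ℕ) (hm₁ : m₁ < 2 ^ j₁) (hm₂ : m₂ < 2 ^ j₂)
    (hempty : ∀ z ∈ P,
      z ∉ Set.Ioo ((m₁ : ℝ) / 2 ^ j₁) (((m₁ : ℝ) + 1) / 2 ^ j₁) ×ˢ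
          Set.Ioo ((m₂ : ℝ) / 2 ^ j₂) (((m₂ : ℝ) + 1) / 2 ^ j₂)) :
    ∫ x in Set.Ico (0 : ℝ) 1 ×ˢ Set.Ico (0 : ℝ) 1,
        discrepancy2 N P x * (haar1 j₁ m₁ x.1 * haar1 j₂ m₂ x.2)
      = -(N : ℝ) * (2 : ℝ) ^ (-2 * (j₁ : ℤ) - 2 * (j₂ : ℤ) - 4) := by
  have hcount (z : ℝ × ℝ) := (integrableOn_indicator_Ioo_mul_haar1 j₁ m₁ z.1).mul_prod
    (integrableOn_indicator_Ioo_mul_haar1 j₂ m₂ z.2)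
  have hlinear := ((integrableOn_id_mul_haar1 j₁ m₁).mul_prod
    (integrableOn_id_mul_haar1 j₂ m₂)).const_mul (N : ℝ)
  rw [Measure.volume_eq_prod, ← Measure.prod_restrict,
    funext (discrepancy2_mul_prod N P (haar1 j₁ m₁) (haar1 j₂ m₂)),
    integral_sub (integrable_finsetSum _ fun z _ => hcount z) hlinear,
    integral_finsetSum _ fun z _ => hcount z,
    Finset.sum_eq_zero fun z hz =>
      integral_indicator_Ioo_mul_haar1_prod_eq_zero hm₁ hm₂ (hempty z hz),
    integral_const_mul,
    integral_prod_mul (fun x => x * haar1 j₁ m₁ x) (fun y => y * haar1 j₂ m₂ y),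
    setIntegral_id_mul_haar1 hm₁, setIntegral_id_mul_haar1 hm₂,
    show -2 * (j₁ : ℤ) - 2 * j₂ - 4 = (-2 * j₁ - 2) + (-2 * j₂ - 2) by ring,
    zpow_add₀ two_ne_zero]
  ring

theorem haar_coefficient_discrepancy_empty_box (N : ℕ) (P : Finset (ℝ × ℝ))
    (hP : ↑P ⊆ Set.Ico (0 : ℝ) 1 ×ˢ Set.Ico (0 : ℝ) 1) (hN : P.card = N)
    (j₁ j₂ m₁ m₂ : ℕ) (hm₁ : m₁ < 2 ^ j₁) (hm₂ : m₂ < 2 ^ j₂)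
    (hempty : ∀ z ∈ P,
      z ∉ Set.Ioo ((m₁ : ℝ) / 2 ^ j₁) (((m₁ : ℝ) + 1) / 2 ^ j₁) ×ˢ
          Set.Ioo ((m₂ : ℝ) / 2 ^ j₂) (((m₂ : ℝ) + 1) / 2 ^ j₂)) :
    ∫ x in Set.Ico (0 : ℝ) 1 ×ˢ Set.Ico (0 : ℝ) 1,
        discrepancy2 N P x * (haar1 j₁ m₁ x.1 * haar1 j₂ m₂ x.2)
      = -(N : ℝ) * (2 : ℝ) ^ (-2 * (j₁ : ℤ) - 2 * (j₂ : ℤ) - 4) :=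
  haar_coefficient_discrepancy_empty_box_general N P j₁ j₂ m₁ m₂ hm₁ hm₂ hempty
end

section
/- For every N ∈ ℕ with N ≥ 2 and every N-point set P ⊂ [0,1)², the L₂-norm of the discrepancy function satisfies ‖D_P‖_{L₂}² ≥ N² · Σ_{j₁+j₂ ≥ M} 2^{j₁+j₂}·(2^{j₁+j₂} − N)·2^{-4j₁-4j₂-8}, where M = ⌈log₂ N⌉ and the sum runs over (j₁,j₂) ∈ ℕ₀² with j₁+j₂ ≥ M. -/
open MeasureTheory

/-!
The tensor Haar functions `h_{j,m}` of the dyadic rectangles `I_{j,m} ⊆ [0,1)²` are pairwise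
orthogonal, so Bessel's inequality bounds `∫ D_P²` below by `∑ ⟨D_P, h_{j,m}⟩² / ‖h_{j,m}‖²`.
If `I_{j,m}` contains no point `z` of `P`, then `z` lies outside `I_{j,m}` in one coordinate, along
which `1_{C_z}` is constant on `I_{j,m}`, so its Haar coefficient vanishes; only the term `N x₁ x₂`
contributes, with coefficient `-N 2^{-2(j₁+j₂)} / 16`. At each level `j` at most `N` of the
`2^{j₁+j₂}` rectangles are occupied.
-/

open Set

theorem sum_sq_integral_mul_div_le_integral_sq {α ι : Type*} [MeasurableSpace α]
    {μ : Measure α} {f : α → ℝ} {g : ι → α → ℝ} {S : Finset ι} (hf : MemLp f 2 μ)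
    (hg : ∀ i ∈ S, MemLp (g i) 2 μ)
    (horth : ∀ i ∈ S, ∀ k ∈ S, i ≠ k → ∫ x, g i x * g k x ∂μ = 0) :
    ∑ i ∈ S, (∫ x, f x * g i x ∂μ) ^ 2 / ∫ x, g i x ^ 2 ∂μ ≤ ∫ x, f x ^ 2 ∂μ := by
  have hmul {u v : α → ℝ} (hu : MemLp u 2 μ) (hv : MemLp v 2 μ) :
      Integrable (fun x => u x * v x) μ := hu.integrable_mul hv
  set c : ι → ℝ := fun i => ∫ x, f x * g i x ∂μ
  set w : ι → ℝ := fun i => ∫ x, g i x ^ 2 ∂μ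
  -- the orthogonal projection of `f` onto the span of the `g i` (a term with `w i = 0` is `0`)
  set F : α → ℝ := fun x => ∑ i ∈ S, c i / w i * g i x
  have hF : MemLp F 2 μ := memLp_finsetSum S fun i hi => (hg i hi).const_mul _
  have hsum {u : α → ℝ} (hu : MemLp u 2 μ) :
      ∫ x, u x * F x ∂μ = ∑ i ∈ S, c i / w i * ∫ x, u x * g i x ∂μ := by
    simp_rw [F, Finset.mul_sum, mul_left_comm (u _)]
    rw [integral_finsetSum S fun i hi => (hmul hu (hg i hi)).const_mul _]
    simp_rw [integral_const_mul]
  have hfF : ∫ x, f x * F x ∂μ = ∑ i ∈ S, c i ^ 2 / w i := by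
    rw [hsum hf]
    exact Finset.sum_congr rfl fun i _ => by ring
  have hFF : ∫ x, F x * F x ∂μ = ∑ i ∈ S, c i ^ 2 / w i := by
    rw [hsum hF]
    refine Finset.sum_congr rfl fun i hi => ?_
    have hFg : ∫ x, F x * g i x ∂μ = c i / w i * w i := by
      simp_rw [mul_comm (F _), hsum (hg i hi)]
      rw [Finset.sum_eq_single i (fun k hk hki => by rw [horth i hi k hk hki.symm, mul_zero])
        (absurd hi)]
      simp_rw [w, sq]
    rw [hFg]
    rcases eq_or_ne (w i) 0 with hw | hw
    · simp [hw]
    · field_simp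
  have hfF2 : Integrable (fun x => 2 * (f x * F x)) μ := (hmul hf hF).const_mul 2
  have hsq : ∀ x, (f x - F x) ^ 2 = f x ^ 2 - 2 * (f x * F x) + F x * F x := fun x => by ring
  have hnonneg : 0 ≤ ∫ x, (f x - F x) ^ 2 ∂μ := integral_nonneg fun x => sq_nonneg _
  rw [funext hsq, integral_add (f := fun x => f x ^ 2 - 2 * (f x * F x))
      (hf.integrable_sq.sub hfF2) (hmul hF hF),
    integral_sub hf.integrable_sq hfF2, integral_const_mul, hfF, hFF] at hnonneg
  linarith

lemma abs_indicator_one_le {α : Type*} (s : Set α) (a : α) : |s.indicator (1 : α → ℝ) a| ≤ 1 := by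
  by_cases h : a ∈ s <;> simp [h]

namespace Discrepancy

section Haar

def dyadicIco (j m : ℕ) : Set ℝ := Ico (m / 2 ^ j) ((m + 1) / 2 ^ j)

variable {j j' m m' k : ℕ} {t : ℝ}

lemma mem_dyadicIco_iff : t ∈ dyadicIco j m ↔ 0 ≤ t ∧ ⌊2 ^ j * t⌋₊ = m := by
  have h2 : (0 : ℝ) < 2 ^ j := by positivity
  constructor
  · rintro ⟨hl, hr⟩
    have ht : 0 ≤ t := le_trans (by positivity) hl
    refine ⟨ht, (Nat.floor_eq_iff (by positivity)).2 ⟨?_, ?_⟩⟩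
    · rwa [div_le_iff₀' h2] at hl
    · rwa [lt_div_iff₀' h2] at hr
  · rintro ⟨ht, hfl⟩
    obtain ⟨hl, hr⟩ := (Nat.floor_eq_iff (by positivity)).1 hfl
    exact ⟨(div_le_iff₀' h2).2 hl, (lt_div_iff₀' h2).2 hr⟩

lemma eq_of_mem_dyadicIco (h : t ∈ dyadicIco j m) (h' : t ∈ dyadicIco j m') : m = m' :=
  (mem_dyadicIco_iff.1 h).2.symm.trans (mem_dyadicIco_iff.1 h').2

lemma mem_dyadicIco_div_pow (hj : j ≤ j') (ht : t ∈ dyadicIco j' m) :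
    t ∈ dyadicIco j (m / 2 ^ (j' - j)) := by
  obtain ⟨k, rfl⟩ := Nat.exists_eq_add_of_le hj
  obtain ⟨ht0, hfl⟩ := mem_dyadicIco_iff.1 ht
  refine mem_dyadicIco_iff.2 ⟨ht0, ?_⟩
  have hscale : (2 : ℝ) ^ j * t = 2 ^ (j + k) * t / ((2 ^ k : ℕ) : ℝ) := by
    push_cast; rw [pow_add]; field_simp
  rw [hscale, Nat.floor_div_natCast, hfl, Nat.add_sub_cancel_left]

lemma dyadicIco_succ_subset : dyadicIco (j + 1) k ⊆ dyadicIco j (k / 2) := fun _ ht => by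
  simpa using mem_dyadicIco_div_pow (Nat.le_succ j) ht

lemma dyadicIco_succ_two_mul_subset : dyadicIco (j + 1) (2 * m) ⊆ dyadicIco j m := by
  simpa using dyadicIco_succ_subset (j := j) (k := 2 * m)

lemma dyadicIco_succ_two_mul_add_one_subset :
    dyadicIco (j + 1) (2 * m + 1) ⊆ dyadicIco j m := by
  simpa [Nat.add_div_of_dvd_right] using dyadicIco_succ_subset (j := j) (k := 2 * m + 1)

lemma dyadicIco_subset_Ico (hm : m < 2 ^ j) : dyadicIco j m ⊆ Ico 0 1 := by
  have hm' : (m : ℝ) + 1 ≤ 2 ^ j := by exact_mod_cast hm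
  exact Ico_subset_Ico (by positivity) ((div_le_one (by positivity)).2 hm')

lemma measurableSet_dyadicIco : MeasurableSet (dyadicIco j m) := measurableSet_Ico

lemma volume_real_dyadicIco : volume.real (dyadicIco j m) = (2 ^ j)⁻¹ := by
  rw [dyadicIco, Real.volume_real_Ico_of_le (by gcongr; linarith)]
  ring

lemma setIntegral_dyadicIco_id (j k : ℕ) :
    ∫ t in dyadicIco j k, t = (((k : ℝ) + 1) ^ 2 - (k : ℝ) ^ 2) / (2 * (2 ^ j) ^ 2) := by
  rw [dyadicIco, integral_Ico_eq_integral_Ioc,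
    ← intervalIntegral.integral_of_le (by gcongr; simp), integral_id]
  field_simp

/-- `+1` on the left half of `dyadicIco j m`, `-1` on its right half. -/
noncomputable def haar (j m : ℕ) : ℝ → ℝ :=
  (dyadicIco (j + 1) (2 * m)).indicator 1 - (dyadicIco (j + 1) (2 * m + 1)).indicator 1

lemma measurable_haar : Measurable (haar j m) :=
  (measurable_const.indicator measurableSet_dyadicIco).sub
    (measurable_const.indicator measurableSet_dyadicIco)

lemma integrable_haar : Integrable (haar j m) := by
  have h : ∀ k, Integrable ((dyadicIco (j + 1) k).indicator (1 : ℝ → ℝ)) := fun _ =>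
    (integrable_indicator_iff measurableSet_dyadicIco).2 (integrableOn_const (by simp [dyadicIco]))
  exact (h _).sub (h _)

lemma abs_haar_le_one : |haar j m t| ≤ 1 := by
  classical
  simp only [haar, Pi.sub_apply, indicator_apply, Pi.one_apply]
  split_ifs <;> norm_num

lemma haar_apply_of_mem (ht : t ∈ dyadicIco (j + 1) k) :
    haar j m t = (if 2 * m = k then 1 else 0) - (if 2 * m + 1 = k then 1 else 0) := by
  have hmem : ∀ n, t ∈ dyadicIco (j + 1) n ↔ n = k := fun n =>
    ⟨fun h => eq_of_mem_dyadicIco h ht, fun h => h ▸ ht⟩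
  classical
  simp only [haar, Pi.sub_apply, indicator_apply, hmem, Pi.one_apply]

lemma haar_eq_zero_of_notMem (ht : t ∉ dyadicIco j m) : haar j m t = 0 := by
  simp [haar, indicator_of_notMem (fun h => ht (dyadicIco_succ_two_mul_subset h)),
    indicator_of_notMem (fun h => ht (dyadicIco_succ_two_mul_add_one_subset h))]

lemma integral_mul_haar {φ : ℝ → ℝ} (hφ : IntegrableOn φ (dyadicIco j m)) :
    ∫ t, φ t * haar j m t =
      (∫ t in dyadicIco (j + 1) (2 * m), φ t) - ∫ t in dyadicIco (j + 1) (2 * m + 1), φ t := by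
  classical
  have hsplit : (fun t => φ t * haar j m t) = fun t =>
      (dyadicIco (j + 1) (2 * m)).indicator φ t -
        (dyadicIco (j + 1) (2 * m + 1)).indicator φ t := by
    ext t
    simp only [haar, Pi.sub_apply, indicator_apply, Pi.one_apply]
    split_ifs <;> ring
  rw [hsplit, integral_sub
      ((hφ.mono_set dyadicIco_succ_two_mul_subset).integrable_indicator measurableSet_dyadicIco)
      ((hφ.mono_set dyadicIco_succ_two_mul_add_one_subset).integrable_indicator
        measurableSet_dyadicIco),
    integral_indicator measurableSet_dyadicIco, integral_indicator measurableSet_dyadicIco]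

lemma integral_mul_haar_of_eqOn {φ : ℝ → ℝ} {c : ℝ} (h : EqOn φ (fun _ => c) (dyadicIco j m)) :
    ∫ t, φ t * haar j m t = 0 := by
  rw [integral_mul_haar ((integrableOn_const (by simp [dyadicIco])).congr_fun h.symm
      measurableSet_dyadicIco),
    setIntegral_congr_fun measurableSet_dyadicIco (h.mono dyadicIco_succ_two_mul_subset),
    setIntegral_congr_fun measurableSet_dyadicIco (h.mono dyadicIco_succ_two_mul_add_one_subset),
    setIntegral_const, setIntegral_const, volume_real_dyadicIco, volume_real_dyadicIco, sub_self]

lemma integral_haar_mul_self : ∫ t, haar j m t * haar j m t = (2 ^ j)⁻¹ := by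
  have hL : ∫ t in dyadicIco (j + 1) (2 * m), haar j m t = (2 ^ (j + 1))⁻¹ := by
    rw [setIntegral_congr_fun measurableSet_dyadicIco (g := fun _ => 1) fun t ht => by
      simp [haar_apply_of_mem ht], setIntegral_const, volume_real_dyadicIco, smul_eq_mul, mul_one]
  have hR : ∫ t in dyadicIco (j + 1) (2 * m + 1), haar j m t = -(2 ^ (j + 1))⁻¹ := by
    rw [setIntegral_congr_fun measurableSet_dyadicIco (g := fun _ => -1) fun t ht => by
      simp [haar_apply_of_mem ht], setIntegral_const, volume_real_dyadicIco, smul_eq_mul,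
      mul_neg_one]
  rw [integral_mul_haar integrable_haar.integrableOn, hL, hR, pow_succ]
  ring

lemma integral_id_mul_haar : ∫ t, t * haar j m t = -((2 ^ j)⁻¹ ^ 2 / 4) := by
  rw [integral_mul_haar (φ := fun t => t)
      (continuous_id.integrableOn_Icc.mono_set Ico_subset_Icc_self),
    setIntegral_dyadicIco_id, setIntegral_dyadicIco_id]
  push_cast
  field_simp
  ring

lemma integral_indicator_Ioo_mul_haar (hm : m < 2 ^ j) {z : ℝ} (hz : z ∉ dyadicIco j m) :
    ∫ t, (Ioo z 1).indicator 1 t * haar j m t = 0 := by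
  rcases lt_or_ge z (m / 2 ^ j) with hlt | hge
  · refine integral_mul_haar_of_eqOn (c := 1) fun t ht => indicator_of_mem ?_ _
    exact ⟨hlt.trans_le ht.1, (dyadicIco_subset_Ico hm ht).2⟩
  · refine integral_mul_haar_of_eqOn (c := 0) fun t ht => indicator_of_notMem ?_ _
    exact fun h => hz ⟨hge, h.1.trans ht.2⟩

lemma exists_eqOn_haar_const (hj : j ≤ j') (hne : (j, m) ≠ (j', m')) :
    ∃ c, EqOn (haar j m) (fun _ => c) (dyadicIco j' m') := by
  rcases hj.lt_or_eq with hlt | rfl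
  · exact ⟨_, fun t ht => haar_apply_of_mem (k := m' / 2 ^ (j' - (j + 1)))
      (mem_dyadicIco_div_pow hlt ht)⟩
  · have hm : m ≠ m' := fun h => hne (h ▸ rfl)
    exact ⟨0, fun t ht => haar_eq_zero_of_notMem fun ht' => hm (eq_of_mem_dyadicIco ht' ht)⟩

lemma integral_haar_mul_haar (hne : (j, m) ≠ (j', m')) :
    ∫ t, haar j m t * haar j' m' t = 0 := by
  wlog hj : j ≤ j' generalizing j m j' m'
  · simpa only [mul_comm] using this hne.symm (le_of_not_ge hj)
  obtain ⟨c, hc⟩ := exists_eqOn_haar_const hj hne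
  exact integral_mul_haar_of_eqOn hc

lemma setIntegral_Ico_mul_haar (hm : m < 2 ^ j) (φ : ℝ → ℝ) :
    ∫ t in Ico 0 1, φ t * haar j m t = ∫ t, φ t * haar j m t :=
  setIntegral_eq_integral_of_forall_compl_eq_zero fun _ ht => by
    rw [haar_eq_zero_of_notMem fun h => ht (dyadicIco_subset_Ico hm h), mul_zero]

end Haar

section UnitSquare

local notation "□" => SProd.sprod (Ico (0 : ℝ) 1) (Ico (0 : ℝ) 1)

instance : IsFiniteMeasure (volume.restrict □) := by
  rw [Measure.volume_eq_prod, ← Measure.prod_restrict]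
  infer_instance

lemma memLp_unitSquare_of_bound {f : ℝ × ℝ → ℝ} (p : ENNReal) (hf : Measurable f) (C : ℝ)
    (hC : ∀ x ∈ □, |f x| ≤ C) : MemLp f p (volume.restrict □) :=
  .of_bound hf.aestronglyMeasurable C
    (ae_restrict_of_forall_mem (measurableSet_Ico.prod measurableSet_Ico) hC)

noncomputable def haar2 (j m : ℕ × ℕ) (x : ℝ × ℝ) : ℝ := haar j.1 m.1 x.1 * haar j.2 m.2 x.2

variable {j m j' m' : ℕ × ℕ}

lemma measurable_haar2 : Measurable (haar2 j m) :=
  (measurable_haar.comp measurable_fst).mul (measurable_haar.comp measurable_snd)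

lemma abs_haar2_le_one (x : ℝ × ℝ) : |haar2 j m x| ≤ 1 := by
  rw [haar2, abs_mul]
  exact mul_le_one₀ abs_haar_le_one (abs_nonneg _) abs_haar_le_one

lemma integrable_unitSquare_mul_haar2 {φ₁ φ₂ : ℝ → ℝ} (h₁ : Measurable φ₁) (h₂ : Measurable φ₂)
    (hb₁ : ∀ t ∈ Ico (0 : ℝ) 1, |φ₁ t| ≤ 1) (hb₂ : ∀ t ∈ Ico (0 : ℝ) 1, |φ₂ t| ≤ 1) :
    Integrable (fun x => φ₁ x.1 * φ₂ x.2 * haar2 j m x) (volume.restrict □) :=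
  memLp_one_iff_integrable.1 <| memLp_unitSquare_of_bound 1
    (((h₁.comp measurable_fst).mul (h₂.comp measurable_snd)).mul measurable_haar2) 1
    fun x hx => by
      rw [abs_mul, abs_mul]
      exact mul_le_one₀ (mul_le_one₀ (hb₁ _ hx.1) (abs_nonneg _) (hb₂ _ hx.2)) (abs_nonneg _)
        (abs_haar2_le_one x)

lemma setIntegral_unitSquare_mul_haar2 (hm₁ : m.1 < 2 ^ j.1) (hm₂ : m.2 < 2 ^ j.2)
    (φ₁ φ₂ : ℝ → ℝ) :
    ∫ x in □, φ₁ x.1 * φ₂ x.2 * haar2 j m x =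
      (∫ t, φ₁ t * haar j.1 m.1 t) * ∫ t, φ₂ t * haar j.2 m.2 t := by
  have h : ∀ x : ℝ × ℝ, φ₁ x.1 * φ₂ x.2 * haar2 j m x =
      φ₁ x.1 * haar j.1 m.1 x.1 * (φ₂ x.2 * haar j.2 m.2 x.2) := fun x => by rw [haar2]; ring
  simp_rw [h]
  rw [Measure.volume_eq_prod, setIntegral_prod_mul (fun t => φ₁ t * haar j.1 m.1 t)
    (fun t => φ₂ t * haar j.2 m.2 t), setIntegral_Ico_mul_haar hm₁, setIntegral_Ico_mul_haar hm₂]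

lemma setIntegral_haar2_mul_haar2 (hm₁ : m.1 < 2 ^ j.1) (hm₂ : m.2 < 2 ^ j.2)
    (hne : (j', m') ≠ (j, m)) : ∫ x in □, haar2 j' m' x * haar2 j m x = 0 := by
  change ∫ x in □, haar j'.1 m'.1 x.1 * haar j'.2 m'.2 x.2 * haar2 j m x = 0
  rw [setIntegral_unitSquare_mul_haar2 hm₁ hm₂]
  by_cases h₁ : (j'.1, m'.1) = (j.1, m.1)
  · have h₂ : (j'.2, m'.2) ≠ (j.2, m.2) := fun h₂ => hne (by
      simp only [Prod.mk.injEq] at h₁ h₂ ⊢; exact ⟨Prod.ext h₁.1 h₂.1, Prod.ext h₁.2 h₂.2⟩)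
    rw [integral_haar_mul_haar h₂, mul_zero]
  · rw [integral_haar_mul_haar h₁, zero_mul]

lemma setIntegral_haar2_sq (hm₁ : m.1 < 2 ^ j.1) (hm₂ : m.2 < 2 ^ j.2) :
    ∫ x in □, haar2 j m x ^ 2 = (2 ^ (j.1 + j.2))⁻¹ := by
  simp_rw [sq]
  change ∫ x in □, haar j.1 m.1 x.1 * haar j.2 m.2 x.2 * haar2 j m x = _
  rw [setIntegral_unitSquare_mul_haar2 hm₁ hm₂, integral_haar_mul_self, integral_haar_mul_self,
    pow_add, mul_inv]

lemma measurable_discrepancy2 (N : ℕ) (P : Finset (ℝ × ℝ)) : Measurable (discrepancy2 N P) := by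
  unfold discrepancy2
  measurability

lemma abs_discrepancy2_le (N : ℕ) (P : Finset (ℝ × ℝ)) {x : ℝ × ℝ} (hx : x ∈ □) :
    |discrepancy2 N P x| ≤ P.card + N := by
  have hcount : |∑ z ∈ P, (Ioo z.1 1 ×ˢ Ioo z.2 1).indicator (fun _ => (1 : ℝ)) x| ≤ P.card := by
    refine (Finset.abs_sum_le_sum_abs _ _).trans ?_
    exact (Finset.sum_le_card_nsmul P _ 1 fun z _ => abs_indicator_one_le _ x).trans_eq (by simp)
  have hvol : |(N : ℝ) * (x.1 * x.2)| ≤ N := by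
    obtain ⟨⟨h₁, h₁'⟩, h₂, h₂'⟩ := hx
    rw [abs_mul, abs_of_nonneg (mul_nonneg h₁ h₂), Nat.abs_cast]
    exact mul_le_of_le_one_right N.cast_nonneg (mul_le_one₀ h₁'.le h₂ h₂'.le)
  exact (abs_sub _ _).trans (add_le_add hcount hvol)

lemma setIntegral_discrepancy2_mul_haar2 (N : ℕ) (P : Finset (ℝ × ℝ))
    (hm₁ : m.1 < 2 ^ j.1) (hm₂ : m.2 < 2 ^ j.2)
    (hempty : ∀ z ∈ P, z ∉ dyadicIco j.1 m.1 ×ˢ dyadicIco j.2 m.2) :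
    ∫ x in □, discrepancy2 N P x * haar2 j m x = -(N * ((2 : ℝ) ^ (j.1 + j.2))⁻¹ ^ 2 / 16) := by
  have hsplit : ∀ x : ℝ × ℝ, discrepancy2 N P x * haar2 j m x =
      (∑ z ∈ P, (Ioo z.1 1).indicator 1 x.1 * (Ioo z.2 1).indicator 1 x.2 * haar2 j m x) -
        N * (x.1 * x.2 * haar2 j m x) := fun x => by
    rw [discrepancy2, sub_mul, Finset.sum_mul, ← Prod.mk.eta (p := x)]
    simp only [← Pi.one_def, indicator_prod_one]
    ring
  have hcount : ∀ z ∈ P, Integrable (fun x : ℝ × ℝ =>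
      (Ioo z.1 1).indicator 1 x.1 * (Ioo z.2 1).indicator 1 x.2 * haar2 j m x)
        (volume.restrict □) := fun _ _ =>
    integrable_unitSquare_mul_haar2 (measurable_const.indicator measurableSet_Ioo)
      (measurable_const.indicator measurableSet_Ioo) (fun t _ => abs_indicator_one_le _ t)
      (fun t _ => abs_indicator_one_le _ t)
  have hvol : Integrable (fun x : ℝ × ℝ => x.1 * x.2 * haar2 j m x) (volume.restrict □) :=
    integrable_unitSquare_mul_haar2 measurable_id measurable_id
      (fun t ht => (abs_of_nonneg ht.1).trans_le ht.2.le)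
      (fun t ht => (abs_of_nonneg ht.1).trans_le ht.2.le)
  have hzero : ∀ z ∈ P, ∫ x in □,
      (Ioo z.1 1).indicator 1 x.1 * (Ioo z.2 1).indicator 1 x.2 * haar2 j m x = 0 := by
    intro z hz
    rw [setIntegral_unitSquare_mul_haar2 hm₁ hm₂]
    rcases not_and_or.1 (hempty z hz) with h | h
    · rw [integral_indicator_Ioo_mul_haar hm₁ h, zero_mul]
    · rw [integral_indicator_Ioo_mul_haar hm₂ h, mul_zero]
  simp_rw [hsplit]
  rw [integral_sub (integrable_finsetSum P hcount) (hvol.const_mul _),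
    integral_finsetSum P hcount, Finset.sum_eq_zero hzero, integral_const_mul,
    setIntegral_unitSquare_mul_haar2 hm₁ hm₂ (fun t => t) (fun t => t), integral_id_mul_haar,
    integral_id_mul_haar, pow_add, mul_inv]
  ring

open Classical in
noncomputable def emptyDyadicRects (P : Finset (ℝ × ℝ)) (j : ℕ × ℕ) : Finset (ℕ × ℕ) :=
  (Finset.range (2 ^ j.1) ×ˢ Finset.range (2 ^ j.2)).filter fun m =>
    ∀ z ∈ P, z ∉ dyadicIco j.1 m.1 ×ˢ dyadicIco j.2 m.2

lemma mem_emptyDyadicRects {P : Finset (ℝ × ℝ)} :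
    m ∈ emptyDyadicRects P j ↔
      (m.1 < 2 ^ j.1 ∧ m.2 < 2 ^ j.2) ∧ ∀ z ∈ P, z ∉ dyadicIco j.1 m.1 ×ˢ dyadicIco j.2 m.2 := by
  simp [emptyDyadicRects]

/-- An occupied dyadic rectangle is the image of one of its points under the floor map. -/
lemma two_pow_le_card_emptyDyadicRects_add_card (P : Finset (ℝ × ℝ)) (j : ℕ × ℕ) :
    2 ^ (j.1 + j.2) ≤ (emptyDyadicRects P j).card + P.card := by
  classical
  set R := Finset.range (2 ^ j.1) ×ˢ Finset.range (2 ^ j.2)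
  have hocc : R.filter (fun m => ¬ ∀ z ∈ P, z ∉ dyadicIco j.1 m.1 ×ˢ dyadicIco j.2 m.2) ⊆
      P.image fun z => (⌊2 ^ j.1 * z.1⌋₊, ⌊2 ^ j.2 * z.2⌋₊) := fun m hm => by
    obtain ⟨z, hz, h₁, h₂⟩ : ∃ z ∈ P, z.1 ∈ dyadicIco j.1 m.1 ∧ z.2 ∈ dyadicIco j.2 m.2 := by
      simpa using (Finset.mem_filter.1 hm).2
    exact Finset.mem_image.2 ⟨z, hz, by
      rw [(mem_dyadicIco_iff.1 h₁).2, (mem_dyadicIco_iff.1 h₂).2]⟩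
  calc 2 ^ (j.1 + j.2) = R.card := by simp [R, pow_add]
    _ = (emptyDyadicRects P j).card +
        (R.filter (fun m => ¬ ∀ z ∈ P, z ∉ dyadicIco j.1 m.1 ×ˢ dyadicIco j.2 m.2)).card :=
      (Finset.card_filter_add_card_filter_not _).symm
    _ ≤ (emptyDyadicRects P j).card + P.card :=
      add_le_add_right ((Finset.card_le_card hocc).trans Finset.card_image_le) _

lemma sum_emptyDyadicRects_sq_setIntegral_div (N : ℕ) (P : Finset (ℝ × ℝ)) (j : ℕ × ℕ) :
    ∑ m ∈ emptyDyadicRects P j,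
        (∫ x in □, discrepancy2 N P x * haar2 j m x) ^ 2 / ∫ x in □, haar2 j m x ^ 2 =
      (emptyDyadicRects P j).card * (N ^ 2 * ((2 : ℝ) ^ (j.1 + j.2))⁻¹ ^ 3 / 256) := by
  rw [← nsmul_eq_mul, ← Finset.sum_const]
  refine Finset.sum_congr rfl fun m hm => ?_
  obtain ⟨⟨hm₁, hm₂⟩, hempty⟩ := mem_emptyDyadicRects.1 hm
  rw [setIntegral_discrepancy2_mul_haar2 N P hm₁ hm₂ hempty, setIntegral_haar2_sq hm₁ hm₂]
  field_simp
  ring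

lemma two_zpow_neg_four_mul_sub_eight (j : ℕ × ℕ) :
    (2 : ℝ) ^ (-4 * (j.1 : ℤ) - 4 * (j.2 : ℤ) - 8) = ((2 : ℝ) ^ (j.1 + j.2))⁻¹ ^ 4 / 256 := by
  rw [show -4 * (j.1 : ℤ) - 4 * (j.2 : ℤ) - 8 = -((4 * (j.1 + j.2) + 8 : ℕ) : ℤ) by
      push_cast; ring,
    zpow_neg, zpow_natCast]
  ring

lemma sq_mul_ite_le_sum_emptyDyadicRects {N : ℕ} {P : Finset (ℝ × ℝ)} (hcard : P.card = N)
    (c : Prop) [Decidable c] (j : ℕ × ℕ) :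
    (N : ℝ) ^ 2 * (if c then (2 : ℝ) ^ (j.1 + j.2) * ((2 : ℝ) ^ (j.1 + j.2) - N) *
        (2 : ℝ) ^ (-4 * (j.1 : ℤ) - 4 * (j.2 : ℤ) - 8) else 0) ≤
      ∑ m ∈ emptyDyadicRects P j,
        (∫ x in □, discrepancy2 N P x * haar2 j m x) ^ 2 / ∫ x in □, haar2 j m x ^ 2 := by
  rw [sum_emptyDyadicRects_sq_setIntegral_div]
  have hK : 0 ≤ (N : ℝ) ^ 2 * ((2 : ℝ) ^ (j.1 + j.2))⁻¹ ^ 3 / 256 := by positivity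
  split_ifs
  · have hcount : (2 : ℝ) ^ (j.1 + j.2) - N ≤ (emptyDyadicRects P j).card := by
      rw [sub_le_iff_le_add, ← hcard]
      exact_mod_cast two_pow_le_card_emptyDyadicRects_add_card P j
    calc _ = ((2 : ℝ) ^ (j.1 + j.2) - N) * (N ^ 2 * ((2 : ℝ) ^ (j.1 + j.2))⁻¹ ^ 3 / 256) := by
          rw [two_zpow_neg_four_mul_sub_eight]; field_simp
      _ ≤ _ := mul_le_mul_of_nonneg_right hcount hK
  · rw [mul_zero]; positivity

lemma sum_sq_mul_ite_le_setIntegral_sq {N : ℕ} {P : Finset (ℝ × ℝ)} (hcard : P.card = N)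
    (c : ℕ × ℕ → Prop) [DecidablePred c] (T : Finset (ℕ × ℕ)) :
    ∑ j ∈ T, (N : ℝ) ^ 2 * (if c j then (2 : ℝ) ^ (j.1 + j.2) * ((2 : ℝ) ^ (j.1 + j.2) - N) *
        (2 : ℝ) ^ (-4 * (j.1 : ℤ) - 4 * (j.2 : ℤ) - 8) else 0) ≤
      ∫ x in □, discrepancy2 N P x ^ 2 := by
  calc _ ≤ ∑ j ∈ T, ∑ m ∈ emptyDyadicRects P j,
        (∫ x in □, discrepancy2 N P x * haar2 j m x) ^ 2 / ∫ x in □, haar2 j m x ^ 2 :=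
        Finset.sum_le_sum fun j _ => sq_mul_ite_le_sum_emptyDyadicRects hcard _ j
    _ = ∑ p ∈ T.sigma (emptyDyadicRects P),
        (∫ x in □, discrepancy2 N P x * haar2 p.1 p.2 x) ^ 2 / ∫ x in □, haar2 p.1 p.2 x ^ 2 := by
        rw [Finset.sum_sigma]
    _ ≤ _ := by
      refine sum_sq_integral_mul_div_le_integral_sq
        (memLp_unitSquare_of_bound 2 (measurable_discrepancy2 N P) _ fun x hx =>
          abs_discrepancy2_le N P hx)
        (fun p _ => memLp_unitSquare_of_bound 2 measurable_haar2 1 fun x _ => abs_haar2_le_one x)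
        fun p _ q hq hpq => ?_
      obtain ⟨⟨hm₁, hm₂⟩, -⟩ := mem_emptyDyadicRects.1 (Finset.mem_sigma.1 hq).2
      exact setIntegral_haar2_mul_haar2 hm₁ hm₂ fun h =>
        hpq (Sigma.ext (congrArg Prod.fst h) (heq_of_eq (congrArg Prod.snd h)))

end UnitSquare

end Discrepancy

theorem L2_discrepancy_sq_lower_bound_sum_general (N : ℕ) (P : Finset (ℝ × ℝ))
    (hcard : P.card = N) :
    (N : ℝ) ^ 2 *
      ∑' j : ℕ × ℕ,
        (if Nat.clog 2 N ≤ j.1 + j.2 then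
          (2 : ℝ) ^ (j.1 + j.2) * ((2 : ℝ) ^ (j.1 + j.2) - N) *
            (2 : ℝ) ^ (-4 * (j.1 : ℤ) - 4 * (j.2 : ℤ) - 8)
        else 0)
      ≤ ∫ x in Set.Ico (0 : ℝ) 1 ×ˢ Set.Ico (0 : ℝ) 1, (discrepancy2 N P x) ^ 2 := by
  rw [← tsum_mul_left]
  exact tsum_le_of_sum_le' (integral_nonneg fun _ => sq_nonneg _)
    (Discrepancy.sum_sq_mul_ite_le_setIntegral_sq hcard _)

theorem L2_discrepancy_sq_lower_bound_sum (N : ℕ) (hN : 2 ≤ N) (P : Finset (ℝ × ℝ))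
    (hP : ↑P ⊆ Set.Ico (0 : ℝ) 1 ×ˢ Set.Ico (0 : ℝ) 1) (hcard : P.card = N) :
    (N : ℝ) ^ 2 *
      ∑' j : ℕ × ℕ,
        (if Nat.clog 2 N ≤ j.1 + j.2 then
          (2 : ℝ) ^ (j.1 + j.2) * ((2 : ℝ) ^ (j.1 + j.2) - N) *
            (2 : ℝ) ^ (-4 * (j.1 : ℤ) - 4 * (j.2 : ℤ) - 8)
        else 0)
      ≤ ∫ x in Set.Ico (0 : ℝ) 1 ×ˢ Set.Ico (0 : ℝ) 1, (discrepancy2 N P x) ^ 2 :=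
  L2_discrepancy_sq_lower_bound_sum_general N P hcard
end

section
/- For every N ∈ ℕ with N ≥ 2 and every N-point set P ⊂ [0,1)^d, ‖D_P‖_{L₂}² ≥ 2^{-4d}·(N·2^{-M})²·(4/3)·M^{d-1}/(d-1)! − 2^{-4d}·(N·2^{-M})³·(8/7)·M^{d-1}/(d-1)!, where M = ⌈log₂ N⌉. -/
open MeasureTheory

/-- The discrepancy function of an `N`-point set `P ⊂ [0,1)^d`. -/
noncomputable def discrepancyD (d N : ℕ) (P : Finset (Fin d → ℝ)) (x : Fin d → ℝ) : ℝ :=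
  (∑ z ∈ P, (Set.univ.pi (fun i => Set.Ioo (z i) 1)).indicator (fun _ => (1 : ℝ)) x) -
    N * ∏ i, x i

/-!
Roth's orthogonal function method. The product Haar functions `h_{r,p}`, one for each dyadic
box of shape `r` (side lengths `2^{-r_i}`), are orthogonal in `L²`. If the box `p` contains no
point of `P`, then for every `z ∈ P` some coordinate `z_i` lies outside the `i`-th side of the
box, so the indicator of `(z_i, 1)` is constant on that side and is annihilated by the
one-dimensional Haar function; only the volume term `N x₁ ⋯ x_d` survives, and
`⟨D_P, h_{r,p}⟩ = -N 4^{-(|r|+d)}`. Every shape has at least `2^{|r|} - N` empty boxes, and for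
`m ≥ M` there are at least `M^{d-1}/(d-1)!` shapes with `|r| = m`. Bessel's inequality for the
normalised Haar functions then bounds `‖D_P‖²` below by
`Σ_{m ≥ M} M^{d-1}/(d-1)! (2^m - N) N² 16^{-d} 8^{-m}`, a difference of two geometric series.
-/

open Set

theorem MeasureTheory.MemLp.inner_toLp_toLp {α : Type*} [MeasurableSpace α] {μ : Measure α}
    {f g : α → ℝ} (hf : MemLp f 2 μ) (hg : MemLp g 2 μ) :
    inner ℝ (hf.toLp f) (hg.toLp g) = ∫ x, f x * g x ∂μ := by
  rw [L2.inner_def]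
  refine integral_congr_ae ?_
  filter_upwards [hf.coeFn_toLp, hg.coeFn_toLp] with x hfx hgx
  rw [hfx, hgx, real_inner_eq_re_inner, RCLike.inner_apply, RCLike.conj_to_real, mul_comm]
  rfl

theorem Finset.Nat.card_antidiagonalTuple_succ (k n : ℕ) :
    (antidiagonalTuple (k + 1) n).card = (n + k).choose k := by
  classical
  rw [← piAntidiag_univ_fin_eq_antidiagonalTuple, ← map_sym_eq_piAntidiag, card_map, sym_univ,
    card_univ, Sym.card_sym_eq_choose, Fintype.card_fin, show k + 1 + n - 1 = n + k by omega,
    Nat.choose_symm_add]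

theorem Finset.Nat.pow_div_factorial_le_card_antidiagonalTuple {k M m : ℕ} (h : M ≤ m) :
    (M : ℝ) ^ k / k.factorial ≤ (antidiagonalTuple (k + 1) m).card := by
  rw [card_antidiagonalTuple_succ]
  refine le_trans ?_ (Nat.pow_le_choose k (m + k))
  gcongr
  omega

noncomputable section

namespace Roth

-- Integer indices, so that every `t : ℝ` lies in `dyadicInterval k ⌊t * 2 ^ k⌋`.
def dyadicInterval (k : ℕ) (m : ℤ) : Set ℝ := Ico (m / 2 ^ k) ((m + 1) / 2 ^ k)

section OneDimensional

variable {k e : ℕ} {j m m' : ℤ} {t : ℝ}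

theorem mem_dyadicInterval : t ∈ dyadicInterval k m ↔ ⌊t * 2 ^ k⌋ = m := by
  have h : (0 : ℝ) < 2 ^ k := by positivity
  rw [dyadicInterval, mem_Ico, Int.floor_eq_iff, div_le_iff₀ h, lt_div_iff₀ h]

theorem mem_dyadicInterval_floor (k : ℕ) (t : ℝ) : t ∈ dyadicInterval k ⌊t * 2 ^ k⌋ :=
  mem_dyadicInterval.2 rfl

theorem eq_of_mem_dyadicInterval (h : t ∈ dyadicInterval k m) (h' : t ∈ dyadicInterval k m') :
    m = m' :=
  (mem_dyadicInterval.1 h).symm.trans (mem_dyadicInterval.1 h')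

theorem mem_dyadicInterval_ediv_two_pow (h : t ∈ dyadicInterval (k + e) m) :
    t ∈ dyadicInterval k (m / 2 ^ e) := by
  rw [mem_dyadicInterval] at h ⊢
  have : t * 2 ^ k = t * 2 ^ (k + e) / ((2 ^ e : ℕ) : ℝ) := by
    push_cast
    rw [pow_add]
    field_simp
  rw [this, Int.floor_div_natCast, h]
  push_cast
  rfl

theorem dyadicInterval_succ_subset : dyadicInterval (k + 1) m ⊆ dyadicInterval k (m / 2) :=
  fun _ h => by simpa using mem_dyadicInterval_ediv_two_pow (e := 1) h

theorem dyadicInterval_subset_Ico (h₀ : 0 ≤ m) (h₁ : m < 2 ^ k) :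
    dyadicInterval k m ⊆ Ico 0 1 := by
  refine Ico_subset_Ico (by positivity) ?_
  rw [div_le_one (by positivity)]
  exact_mod_cast h₁

theorem measurableSet_dyadicInterval : MeasurableSet (dyadicInterval k m) := measurableSet_Ico

theorem volume_dyadicInterval_ne_top : volume (dyadicInterval k m) ≠ ⊤ := by
  simp [dyadicInterval]

theorem volume_real_dyadicInterval (k : ℕ) (m : ℤ) :
    volume.real (dyadicInterval k m) = (2 ^ k)⁻¹ := by
  rw [dyadicInterval, Real.volume_real_Ico_of_le (by gcongr; linarith)]
  field_simp
  ring

theorem setIntegral_dyadicInterval_id (k : ℕ) (m : ℤ) :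
    ∫ t in dyadicInterval k m, t = (2 * m + 1) / 2 / 4 ^ k := by
  rw [dyadicInterval, integral_Ico_eq_integral_Ioc,
    ← intervalIntegral.integral_of_le (by gcongr; linarith), integral_id,
    show (4 : ℝ) = 2 ^ 2 by norm_num, ← pow_mul, pow_mul']
  field_simp
  ring

def haar (k : ℕ) (j : ℤ) : ℝ → ℝ :=
  (dyadicInterval (k + 1) (2 * j + 1)).indicator 1 - (dyadicInterval (k + 1) (2 * j)).indicator 1

theorem haar_apply_of_mem (h : t ∈ dyadicInterval (k + 1) m) :
    haar k j t = (if m = 2 * j + 1 then 1 else 0) - if m = 2 * j then 1 else 0 := by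
  have hmem : ∀ n, t ∈ dyadicInterval (k + 1) n ↔ m = n :=
    fun n => ⟨eq_of_mem_dyadicInterval h, fun hn => hn ▸ h⟩
  classical
  simp only [haar, Pi.sub_apply, indicator_apply, hmem, Pi.one_apply]

theorem haar_sq (k : ℕ) (j : ℤ) (t : ℝ) :
    haar k j t ^ 2 = (dyadicInterval k j).indicator 1 t := by
  have ht := mem_dyadicInterval_floor (k + 1) t
  have hj : t ∈ dyadicInterval k j ↔ ⌊t * 2 ^ (k + 1)⌋ / 2 = j :=
    ⟨fun h => eq_of_mem_dyadicInterval (dyadicInterval_succ_subset ht) h,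
      fun h => h ▸ dyadicInterval_succ_subset ht⟩
  classical
  rw [haar_apply_of_mem ht, indicator_apply, hj]
  split_ifs <;> first | omega | norm_num

theorem mem_dyadicInterval_of_haar_ne_zero (h : haar k j t ≠ 0) : t ∈ dyadicInterval k j := by
  by_contra ht
  exact h (pow_eq_zero_iff two_ne_zero |>.1 (by rw [haar_sq, indicator_of_notMem ht]))

theorem measurable_haar (k : ℕ) (j : ℤ) : Measurable (haar k j) :=
  (measurable_one.indicator measurableSet_Ico).sub (measurable_one.indicator measurableSet_Ico)

theorem haar_mul_eq_indicator_sub (g : ℝ → ℝ) (t : ℝ) :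
    haar k j t * g t = (dyadicInterval (k + 1) (2 * j + 1)).indicator g t -
      (dyadicInterval (k + 1) (2 * j)).indicator g t := by
  classical
  simp only [haar, Pi.sub_apply, indicator_apply, Pi.one_apply]
  split_ifs <;> ring

theorem integrable_indicator_dyadicInterval_succ {g : ℝ → ℝ}
    (hg : IntegrableOn g (dyadicInterval k j)) (hm : m / 2 = j) :
    Integrable ((dyadicInterval (k + 1) m).indicator g) :=
  (integrable_indicator_iff measurableSet_dyadicInterval).2
    (hg.mono_set (hm ▸ dyadicInterval_succ_subset))

theorem integrable_haar_mul {g : ℝ → ℝ} (hg : IntegrableOn g (dyadicInterval k j)) :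
    Integrable fun t => haar k j t * g t := by
  simp only [haar_mul_eq_indicator_sub]
  exact (integrable_indicator_dyadicInterval_succ hg (by omega)).sub
    (integrable_indicator_dyadicInterval_succ hg (by omega))

theorem integral_haar_mul_eq_setIntegral_sub {g : ℝ → ℝ}
    (hg : IntegrableOn g (dyadicInterval k j)) :
    ∫ t, haar k j t * g t = (∫ t in dyadicInterval (k + 1) (2 * j + 1), g t) -
      ∫ t in dyadicInterval (k + 1) (2 * j), g t := by
  simp only [haar_mul_eq_indicator_sub]
  rw [integral_sub, integral_indicator measurableSet_dyadicInterval,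
    integral_indicator measurableSet_dyadicInterval]
  all_goals exact integrable_indicator_dyadicInterval_succ hg (by omega)

theorem integral_haar (k : ℕ) (j : ℤ) : ∫ t, haar k j t = 0 := by
  simpa [volume_real_dyadicInterval] using
    integral_haar_mul_eq_setIntegral_sub (k := k) (j := j) (g := 1)
      (integrableOn_const volume_dyadicInterval_ne_top)

theorem integrable_haar_sq (k : ℕ) (j : ℤ) : Integrable fun t => haar k j t ^ 2 := by
  simp only [haar_sq]
  exact (integrable_indicator_iff measurableSet_dyadicInterval).2
    (integrableOn_const volume_dyadicInterval_ne_top)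

theorem integral_haar_sq (k : ℕ) (j : ℤ) : ∫ t, haar k j t ^ 2 = (2 ^ k)⁻¹ := by
  simp only [haar_sq]
  rw [integral_indicator_one measurableSet_dyadicInterval, volume_real_dyadicInterval]

theorem integrableOn_id_dyadicInterval : IntegrableOn (fun t => t) (dyadicInterval k j) :=
  continuous_id.integrableOn_Icc.mono_set Ico_subset_Icc_self

theorem integrable_haar_mul_id (k : ℕ) (j : ℤ) : Integrable fun t => haar k j t * t :=
  integrable_haar_mul integrableOn_id_dyadicInterval

theorem integral_haar_mul_id (k : ℕ) (j : ℤ) : ∫ t, haar k j t * t = (4 ^ (k + 1))⁻¹ := by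
  rw [integral_haar_mul_eq_setIntegral_sub integrableOn_id_dyadicInterval,
    setIntegral_dyadicInterval_id, setIntegral_dyadicInterval_id]
  push_cast
  ring

theorem integrable_haar_mul_indicator_Ioo (k : ℕ) (j : ℤ) (z : ℝ) :
    Integrable fun t => haar k j t * (Ioo z 1).indicator 1 t :=
  integrable_haar_mul
    ((integrableOn_const volume_dyadicInterval_ne_top).indicator measurableSet_Ioo)

theorem integral_haar_mul_eq_zero_of_const {g : ℝ → ℝ} {c : ℝ}
    (hg : ∀ t ∈ dyadicInterval k j, g t = c) : ∫ t, haar k j t * g t = 0 := by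
  have : ∀ t, haar k j t * g t = haar k j t * c := fun t => by
    by_cases h : haar k j t = 0
    · simp [h]
    · rw [hg t (mem_dyadicInterval_of_haar_ne_zero h)]
  simp only [this, integral_mul_const, integral_haar, zero_mul]

theorem exists_haar_eq_const_on_dyadicInterval {k' : ℕ} {j' : ℤ} (hk : k' ≤ k)
    (h : (k, j) ≠ (k', j')) : ∃ c, ∀ t ∈ dyadicInterval k j, haar k' j' t = c := by
  obtain rfl | hlt := hk.eq_or_lt
  · refine ⟨0, fun t ht => ?_⟩
    by_contra hne
    exact h (by rw [eq_of_mem_dyadicInterval ht (mem_dyadicInterval_of_haar_ne_zero hne)])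
  · obtain ⟨e, rfl⟩ := Nat.exists_eq_add_of_lt hlt
    rw [add_right_comm]
    exact ⟨_, fun t ht => haar_apply_of_mem (mem_dyadicInterval_ediv_two_pow ht)⟩

theorem integral_haar_mul_haar {k' : ℕ} {j' : ℤ} (h : (k, j) ≠ (k', j')) :
    ∫ t, haar k j t * haar k' j' t = 0 := by
  wlog hk : k' ≤ k generalizing k j k' j'
  · simpa only [mul_comm] using this h.symm (le_of_not_ge hk)
  obtain ⟨c, hc⟩ := exists_haar_eq_const_on_dyadicInterval hk h
  exact integral_haar_mul_eq_zero_of_const hc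

theorem integral_haar_mul_indicator_Ioo {z : ℝ} (hj₀ : 0 ≤ j) (hj₁ : j < 2 ^ k)
    (hz : z ∉ dyadicInterval k j) : ∫ t, haar k j t * (Ioo z 1).indicator 1 t = 0 := by
  rw [dyadicInterval, mem_Ico, not_and_or, not_le, not_lt] at hz
  rcases hz with hz | hz
  · refine integral_haar_mul_eq_zero_of_const (c := 1) fun t ht => indicator_of_mem ?_ _
    exact ⟨hz.trans_le ht.1, (dyadicInterval_subset_Ico hj₀ hj₁ ht).2⟩
  · exact integral_haar_mul_eq_zero_of_const (c := 0) fun t ht =>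
      indicator_of_notMem (fun h => (ht.2.trans_le hz).not_gt h.1) _

end OneDimensional

variable {ι : Type*} [Fintype ι]

def unitCube (ι : Type*) : Set (ι → ℝ) := univ.pi fun _ => Ico 0 1

theorem measurableSet_unitCube : MeasurableSet (unitCube ι) :=
  MeasurableSet.univ_pi fun _ => measurableSet_Ico

def dyadicBox (r : ι → ℕ) (p : ι → ℤ) : Set (ι → ℝ) :=
  univ.pi fun i => dyadicInterval (r i) (p i)

open scoped Classical in
def dyadicIndices (r : ι → ℕ) : Finset (ι → ℤ) :=
  Fintype.piFinset fun i => Finset.Ico 0 (2 ^ r i)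

theorem mem_dyadicIndices {r : ι → ℕ} {p : ι → ℤ} :
    p ∈ dyadicIndices r ↔ ∀ i, 0 ≤ p i ∧ p i < 2 ^ r i := by
  simp [dyadicIndices]

theorem card_dyadicIndices (r : ι → ℕ) : (dyadicIndices r).card = 2 ^ ∑ i, r i := by
  simp only [dyadicIndices, Fintype.card_piFinset, Int.card_Ico, sub_zero,
    ← Finset.prod_pow_eq_pow_sum]
  norm_cast

theorem dyadicBox_subset_unitCube {r : ι → ℕ} {p : ι → ℤ} (hp : p ∈ dyadicIndices r) :
    dyadicBox r p ⊆ unitCube ι :=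
  pi_mono fun i _ => dyadicInterval_subset_Ico (mem_dyadicIndices.1 hp i).1
    (mem_dyadicIndices.1 hp i).2

open scoped Classical in
def emptyDyadicIndices (P : Finset (ι → ℝ)) (r : ι → ℕ) : Finset (ι → ℤ) :=
  {p ∈ dyadicIndices r | ∀ z ∈ P, z ∉ dyadicBox r p}

theorem mem_emptyDyadicIndices {P : Finset (ι → ℝ)} {r : ι → ℕ} {p : ι → ℤ} :
    p ∈ emptyDyadicIndices P r ↔
      p ∈ dyadicIndices r ∧ ∀ z ∈ P, z ∉ dyadicBox r p := by
  classical
  simp [emptyDyadicIndices]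

theorem two_pow_sum_le_card_emptyDyadicIndices_add (P : Finset (ι → ℝ)) (r : ι → ℕ) :
    2 ^ ∑ i, r i ≤ (emptyDyadicIndices P r).card + P.card := by
  classical
  have hsubset : emptyDyadicIndices P r ⊆ dyadicIndices r := fun p hp =>
    (mem_emptyDyadicIndices.1 hp).1
  have hoccupied : dyadicIndices r \ emptyDyadicIndices P r ⊆
      P.image fun z i => ⌊z i * 2 ^ r i⌋ := by
    intro p hp
    simp only [Finset.mem_sdiff, mem_emptyDyadicIndices, not_and, not_forall, not_not] at hp
    obtain ⟨z, hz, hzp⟩ := hp.2 hp.1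
    simp only [dyadicBox, mem_univ_pi, mem_dyadicInterval] at hzp
    exact Finset.mem_image.2 ⟨z, hz, funext hzp⟩
  have := Finset.card_le_card hoccupied |>.trans Finset.card_image_le
  rw [← card_dyadicIndices, ← Finset.card_sdiff_add_card_eq_card hsubset]
  omega

def haarProd (r : ι → ℕ) (p : ι → ℤ) (x : ι → ℝ) : ℝ :=
  ∏ i, haar (r i) (p i) (x i)

theorem haarProd_eq_zero_of_notMem {r : ι → ℕ} {p : ι → ℤ} {x : ι → ℝ}
    (hx : x ∉ dyadicBox r p) : haarProd r p x = 0 := by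
  simp only [dyadicBox, mem_univ_pi, not_forall] at hx
  obtain ⟨i, hi⟩ := hx
  exact Finset.prod_eq_zero (Finset.mem_univ i)
    (not_not.1 (mt mem_dyadicInterval_of_haar_ne_zero hi))

theorem integral_haarProd_mul_haarProd {r r' : ι → ℕ} {p p' : ι → ℤ}
    (h : (r, p) ≠ (r', p')) : ∫ x, haarProd r p x * haarProd r' p' x = 0 := by
  obtain ⟨i, hi⟩ : ∃ i, (r i, p i) ≠ (r' i, p' i) := by
    by_contra! h'
    exact h (Prod.ext (funext fun i => congrArg Prod.fst (h' i))
      (funext fun i => congrArg Prod.snd (h' i)))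
  simp only [haarProd, ← Finset.prod_mul_distrib]
  rw [integral_fintype_prod_volume_eq_prod fun i t => haar (r i) (p i) t * haar (r' i) (p' i) t]
  exact Finset.prod_eq_zero (Finset.mem_univ i) (integral_haar_mul_haar hi)

theorem integral_haarProd_sq (r : ι → ℕ) (p : ι → ℤ) :
    ∫ x, haarProd r p x ^ 2 = (2 ^ ∑ i, r i)⁻¹ := by
  simp only [haarProd, ← Finset.prod_pow]
  rw [integral_fintype_prod_volume_eq_prod fun i t => haar (r i) (p i) t ^ 2,
    ← Finset.prod_pow_eq_pow_sum, ← Finset.prod_inv_distrib]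
  exact Finset.prod_congr rfl fun i _ => integral_haar_sq _ _

theorem memLp_haarProd (r : ι → ℕ) (p : ι → ℤ) : MemLp (haarProd r p) 2 := by
  refine (memLp_two_iff_integrable_sq (Finset.measurable_prod _ fun i _ =>
    (measurable_haar _ _).comp (measurable_pi_apply i)).aestronglyMeasurable).2 ?_
  simp only [← Finset.prod_pow]
  exact Integrable.fintype_prod fun i => integrable_haar_sq (r i) (p i)

def normalizedHaar (r : ι → ℕ) (p : ι → ℤ) : Lp ℝ 2 (volume : Measure (ι → ℝ)) :=
  √(2 ^ ∑ i, r i) • (memLp_haarProd r p).toLp (haarProd r p)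

theorem inner_normalizedHaar_toLp {f : (ι → ℝ) → ℝ} (hf : MemLp f 2) (r : ι → ℕ)
    (p : ι → ℤ) :
    inner ℝ (normalizedHaar r p) (hf.toLp f) =
      √(2 ^ ∑ i, r i) * ∫ x, haarProd r p x * f x := by
  rw [normalizedHaar, real_inner_smul_left, MemLp.inner_toLp_toLp]

theorem orthonormal_normalizedHaar :
    Orthonormal ℝ fun rp : (ι → ℕ) × (ι → ℤ) => normalizedHaar rp.1 rp.2 := by
  rw [orthonormal_iff_ite]
  rintro ⟨r, p⟩ ⟨r', p'⟩
  simp only [normalizedHaar]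
  rw [real_inner_smul_left, real_inner_smul_right, MemLp.inner_toLp_toLp]
  split_ifs with h
  · obtain ⟨rfl, rfl⟩ := Prod.mk.inj h
    simp only [← mul_assoc, ← sq, integral_haarProd_sq]
    rw [Real.sq_sqrt (by positivity), mul_inv_cancel₀ (by positivity)]
  · rw [integral_haarProd_mul_haarProd h, mul_zero, mul_zero]

theorem sum_sum_inner_normalizedHaar_sq_le (R : Finset (ι → ℕ))
    (S : (ι → ℕ) → Finset (ι → ℤ)) (f : Lp ℝ 2 (volume : Measure (ι → ℝ))) :
    ∑ r ∈ R, ∑ p ∈ S r, inner ℝ (normalizedHaar r p) f ^ 2 ≤ ‖f‖ ^ 2 := by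
  have := orthonormal_normalizedHaar.sum_inner_products_le f
    (s := (R.sigma S).map (Equiv.sigmaEquivProd _ _).toEmbedding)
  simpa [Finset.sum_map, Finset.sum_sigma, Real.norm_eq_abs, sq_abs] using this

theorem integral_prod_haar_mul_indicator_Ioo {r : ι → ℕ} {p : ι → ℤ} {z : ι → ℝ}
    (hp : p ∈ dyadicIndices r) (hz : z ∉ dyadicBox r p) :
    ∫ x : ι → ℝ, ∏ i, haar (r i) (p i) (x i) * (Ioo (z i) 1).indicator 1 (x i) = 0 := by
  obtain ⟨i, hi⟩ : ∃ i, z i ∉ dyadicInterval (r i) (p i) := by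
    simpa [dyadicBox] using hz
  rw [integral_fintype_prod_volume_eq_prod
    fun i t => haar (r i) (p i) t * (Ioo (z i) 1).indicator 1 t]
  exact Finset.prod_eq_zero (Finset.mem_univ i) (integral_haar_mul_indicator_Ioo
    (mem_dyadicIndices.1 hp i).1 (mem_dyadicIndices.1 hp i).2 hi)

theorem integral_prod_haar_mul_id (r : ι → ℕ) (p : ι → ℤ) :
    ∫ x : ι → ℝ, ∏ i, haar (r i) (p i) (x i) * x i =
      (4 ^ (∑ i, r i + Fintype.card ι))⁻¹ := by
  rw [integral_fintype_prod_volume_eq_prod fun i t => haar (r i) (p i) t * t,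
    Finset.prod_congr rfl fun i _ => integral_haar_mul_id (r i) (p i), Finset.prod_inv_distrib,
    Finset.prod_pow_eq_pow_sum, Finset.sum_add_distrib, Finset.sum_const, Finset.card_univ,
    smul_eq_mul, mul_one]

section Discrepancy

variable {d N : ℕ} {P : Finset (Fin d → ℝ)}

open Finset.Nat (antidiagonalTuple mem_antidiagonalTuple)

theorem indicator_univ_pi_one_apply (t : ι → Set ℝ) (x : ι → ℝ) :
    (univ.pi t).indicator (fun _ => (1 : ℝ)) x = ∏ i, (t i).indicator 1 (x i) := by
  rw [← Finset.coe_univ]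
  exact indicator_pi_one_apply Finset.univ t x

theorem measurable_discrepancyD (d N : ℕ) (P : Finset (Fin d → ℝ)) :
    Measurable (discrepancyD d N P) :=
  (Finset.measurable_sum _ fun _ _ => measurable_const.indicator
    (MeasurableSet.univ_pi fun _ => measurableSet_Ioo)).sub
    (measurable_const.mul (Finset.measurable_prod _ fun i _ => measurable_pi_apply i))

theorem abs_discrepancyD_le {x : Fin d → ℝ} (hx : x ∈ unitCube (Fin d)) :
    |discrepancyD d N P x| ≤ P.card + N := by
  simp only [unitCube, mem_univ_pi, mem_Ico] at hx
  set count := ∑ z ∈ P, (univ.pi fun i => Ioo (z i) 1).indicator (fun _ => (1 : ℝ)) x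
  have hcount₀ : 0 ≤ count :=
    Finset.sum_nonneg fun _ _ => indicator_nonneg (fun _ _ => zero_le_one) _
  have hcount₁ : count ≤ P.card := by
    simpa using Finset.sum_le_card_nsmul P
      (fun z => (univ.pi fun i => Ioo (z i) 1).indicator (fun _ => (1 : ℝ)) x) 1 fun _ _ =>
        indicator_apply_le' (fun _ => le_rfl) (fun _ => zero_le_one)
  have hvol₀ : 0 ≤ ∏ i, x i := Finset.prod_nonneg fun i _ => (hx i).1
  have hvol₁ : ∏ i, x i ≤ 1 := Finset.prod_le_one (fun i _ => (hx i).1) fun i _ => (hx i).2.le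
  have hN : (0 : ℝ) ≤ N := N.cast_nonneg
  rw [discrepancyD, abs_sub_le_iff]
  constructor <;> nlinarith

theorem memLp_indicator_discrepancyD (d N : ℕ) (P : Finset (Fin d → ℝ)) :
    MemLp ((unitCube (Fin d)).indicator (discrepancyD d N P)) 2 := by
  have : IsFiniteMeasure (volume.restrict (unitCube (Fin d))) :=
    isFiniteMeasure_restrict.2 (by simp [unitCube, volume_pi_pi, Real.volume_Ico])
  refine (memLp_indicator_iff_restrict measurableSet_unitCube).2
    (MemLp.of_bound (measurable_discrepancyD d N P).aestronglyMeasurable (P.card + N) ?_)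
  exact (ae_restrict_iff' measurableSet_unitCube).2
    (Filter.Eventually.of_forall fun x hx => abs_discrepancyD_le hx)

def discrepancyL2 (d N : ℕ) (P : Finset (Fin d → ℝ)) :
    Lp ℝ 2 (volume : Measure (Fin d → ℝ)) :=
  (memLp_indicator_discrepancyD d N P).toLp _

theorem norm_discrepancyL2_sq (d N : ℕ) (P : Finset (Fin d → ℝ)) :
    ‖discrepancyL2 d N P‖ ^ 2 = ∫ x in unitCube (Fin d), discrepancyD d N P x ^ 2 := by
  rw [← real_inner_self_eq_norm_sq, discrepancyL2, MemLp.inner_toLp_toLp,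
    ← integral_indicator measurableSet_unitCube]
  congr 1 with x
  by_cases hx : x ∈ unitCube (Fin d) <;> simp [hx, sq]

theorem haarProd_mul_indicator_discrepancyD {r : Fin d → ℕ} {p : Fin d → ℤ}
    (hp : p ∈ dyadicIndices r) (x : Fin d → ℝ) :
    haarProd r p x * (unitCube (Fin d)).indicator (discrepancyD d N P) x =
      (∑ z ∈ P, ∏ i, haar (r i) (p i) (x i) * (Ioo (z i) 1).indicator 1 (x i)) -
        N * ∏ i, haar (r i) (p i) (x i) * x i := by
  have hcube : haarProd r p x * (unitCube (Fin d)).indicator (discrepancyD d N P) x =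
      haarProd r p x * discrepancyD d N P x := by
    by_cases hx : x ∈ dyadicBox r p
    · rw [indicator_of_mem (dyadicBox_subset_unitCube hp hx)]
    · simp only [haarProd_eq_zero_of_notMem hx, zero_mul]
  rw [hcube, discrepancyD]
  simp only [indicator_univ_pi_one_apply, haarProd, mul_sub, Finset.mul_sum,
    ← Finset.prod_mul_distrib]
  rw [Finset.prod_mul_distrib]
  ring

theorem integral_haarProd_mul_discrepancyD {r : Fin d → ℕ} {p : Fin d → ℤ}
    (hp : p ∈ dyadicIndices r) (hP : ∀ z ∈ P, z ∉ dyadicBox r p) :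
    ∫ x, haarProd r p x * (unitCube (Fin d)).indicator (discrepancyD d N P) x =
      -N * (4 ^ (∑ i, r i + d))⁻¹ := by
  have hbox (z : Fin d → ℝ) : Integrable fun x : Fin d → ℝ =>
      ∏ i, haar (r i) (p i) (x i) * (Ioo (z i) 1).indicator 1 (x i) :=
    Integrable.fintype_prod fun i => integrable_haar_mul_indicator_Ioo _ _ _
  simp only [haarProd_mul_indicator_discrepancyD hp]
  rw [integral_sub (integrable_finsetSum _ fun z _ => hbox z)
      ((Integrable.fintype_prod fun i => integrable_haar_mul_id _ _).const_mul _),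
    integral_finsetSum _ fun z _ => hbox z,
    Finset.sum_eq_zero fun z hz => integral_prod_haar_mul_indicator_Ioo hp (hP z hz),
    integral_const_mul, integral_prod_haar_mul_id, Fintype.card_fin]
  ring

theorem inner_normalizedHaar_discrepancyL2_sq {r : Fin d → ℕ} {p : Fin d → ℤ}
    (hp : p ∈ dyadicIndices r) (hP : ∀ z ∈ P, z ∉ dyadicBox r p) :
    inner ℝ (normalizedHaar r p) (discrepancyL2 d N P) ^ 2 =
      N ^ 2 / (16 ^ d * 8 ^ ∑ i, r i) := by
  rw [discrepancyL2, inner_normalizedHaar_toLp, integral_haarProd_mul_discrepancyD hp hP, mul_pow,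
    Real.sq_sqrt (by positivity)]
  simp only [show (4 : ℝ) = 2 ^ 2 by norm_num, show (8 : ℝ) = 2 ^ 3 by norm_num,
    show (16 : ℝ) = 2 ^ 4 by norm_num, ← pow_mul]
  field_simp
  ring

theorem le_sum_antidiagonalTuple_inner_sq {m : ℕ} (hcard : P.card ≤ N) (hNm : N ≤ 2 ^ m)
    {C : ℝ} (hC : C ≤ (antidiagonalTuple d m).card) :
    C * (2 ^ m - N) * (N ^ 2 / (16 ^ d * 8 ^ m)) ≤
      ∑ r ∈ antidiagonalTuple d m, ∑ p ∈ emptyDyadicIndices P r,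
        inner ℝ (normalizedHaar r p) (discrepancyL2 d N P) ^ 2 := by
  have hgap : (0 : ℝ) ≤ 2 ^ m - N := sub_nonneg.2 (by exact_mod_cast hNm)
  have hshape : ∀ r ∈ antidiagonalTuple d m, (2 ^ m - N) * (N ^ 2 / (16 ^ d * 8 ^ m)) ≤
      ∑ p ∈ emptyDyadicIndices P r,
        inner ℝ (normalizedHaar r p) (discrepancyL2 d N P) ^ 2 := by
    intro r hr
    have hsum : ∑ i, r i = m := mem_antidiagonalTuple.1 hr
    have hempty := two_pow_sum_le_card_emptyDyadicIndices_add P r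
    rw [hsum] at hempty
    rw [Finset.sum_congr rfl fun p hp => inner_normalizedHaar_discrepancyL2_sq
      (mem_emptyDyadicIndices.1 hp).1 (mem_emptyDyadicIndices.1 hp).2, Finset.sum_const,
      nsmul_eq_mul, hsum]
    gcongr
    rw [sub_le_iff_le_add]
    exact_mod_cast hempty.trans (by omega)
  calc C * (2 ^ m - N) * (N ^ 2 / (16 ^ d * 8 ^ m))
      ≤ (antidiagonalTuple d m).card * ((2 ^ m - N) * (N ^ 2 / (16 ^ d * 8 ^ m))) := by
        rw [mul_assoc]
        gcongr
    _ ≤ _ := by simpa using Finset.card_nsmul_le_sum _ _ _ hshape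

theorem sum_range_le_integral_discrepancyD_sq {M : ℕ} (hcard : P.card ≤ N) (hNM : N ≤ 2 ^ M)
    {C : ℝ} (hC : ∀ m, M ≤ m → C ≤ (antidiagonalTuple d m).card) (K : ℕ) :
    ∑ i ∈ Finset.range K, C * (2 ^ (M + i) - N) * (N ^ 2 / (16 ^ d * 8 ^ (M + i))) ≤
      ∫ x in unitCube (Fin d), discrepancyD d N P x ^ 2 := by
  have hdisj : (Finset.range K : Set ℕ).PairwiseDisjoint
      fun i => antidiagonalTuple d (M + i) := by
    intro i _ j _ hij
    refine Finset.disjoint_left.2 fun r hi hj => hij ?_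
    rw [mem_antidiagonalTuple] at hi hj
    omega
  rw [← norm_discrepancyL2_sq]
  calc _ ≤ ∑ i ∈ Finset.range K, ∑ r ∈ antidiagonalTuple d (M + i),
          ∑ p ∈ emptyDyadicIndices P r,
            inner ℝ (normalizedHaar r p) (discrepancyL2 d N P) ^ 2 :=
        Finset.sum_le_sum fun i _ => le_sum_antidiagonalTuple_inner_sq hcard
          (hNM.trans (Nat.pow_le_pow_right two_pos (M.le_add_right i))) (hC _ (M.le_add_right i))
    _ = _ := (Finset.sum_biUnion hdisj).symm
    _ ≤ _ := sum_sum_inner_normalizedHaar_sq_le _ _ _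

end Discrepancy

theorem hasSum_levelLowerBounds (C : ℝ) (d M N : ℕ) :
    HasSum (fun i => C * (2 ^ (M + i) - N) * (N ^ 2 / (16 ^ d * 8 ^ (M + i))))
      (C / 16 ^ d * ((N / 2 ^ M) ^ 2 * (4 / 3) - (N / 2 ^ M) ^ 3 * (8 / 7))) := by
  have h4 := hasSum_geometric_of_lt_one (r := (4 : ℝ)⁻¹) (by norm_num) (by norm_num)
  have h8 := hasSum_geometric_of_lt_one (r := (8 : ℝ)⁻¹) (by norm_num) (by norm_num)
  rw [show (1 - (4 : ℝ)⁻¹)⁻¹ = 4 / 3 by norm_num] at h4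
  rw [show (1 - (8 : ℝ)⁻¹)⁻¹ = 8 / 7 by norm_num] at h8
  refine (((h4.mul_left (((N : ℝ) / 2 ^ M) ^ 2)).sub
    (h8.mul_left (((N : ℝ) / 2 ^ M) ^ 3))).mul_left (C / 16 ^ d)).congr_fun fun i => ?_
  simp only [inv_pow, show (4 : ℝ) = 2 ^ 2 by norm_num, show (8 : ℝ) = 2 ^ 3 by norm_num,
    show (16 : ℝ) = 2 ^ 4 by norm_num, ← pow_mul]
  field_simp
  ring

end Roth

end

theorem L2_discrepancy_sq_lower_bound_d_general (d N : ℕ) (hN : 2 ≤ N) (P : Finset (Fin d → ℝ))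
    (hcard : P.card = N) :
    (2 : ℝ) ^ (-(4 : ℤ) * d) * ((N : ℝ) * 2 ^ (-(Nat.clog 2 N : ℤ))) ^ 2 * (4 / 3) *
        (Nat.clog 2 N : ℝ) ^ (d - 1) / (Nat.factorial (d - 1)) -
      (2 : ℝ) ^ (-(4 : ℤ) * d) * ((N : ℝ) * 2 ^ (-(Nat.clog 2 N : ℤ))) ^ 3 * (8 / 7) *
        (Nat.clog 2 N : ℝ) ^ (d - 1) / (Nat.factorial (d - 1))
      ≤ ∫ x in Set.univ.pi (fun _ : Fin d => Set.Ico (0 : ℝ) 1), (discrepancyD d N P x) ^ 2 := by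
  obtain ⟨k, rfl⟩ : ∃ k, d = k + 1 := Nat.exists_eq_succ_of_ne_zero fun hd => by
    subst hd
    have := Finset.card_le_one_of_subsingleton P
    omega
  have hpartial := Roth.sum_range_le_integral_discrepancyD_sq hcard.le
    (Nat.le_pow_clog one_lt_two N)
    fun m hm => Finset.Nat.pow_div_factorial_le_card_antidiagonalTuple (k := k) hm
  refine le_of_eq_of_le ?_
    (le_of_tendsto' (Roth.hasSum_levelLowerBounds _ _ _ _).tendsto_sum_nat hpartial)
  rw [show (-4 : ℤ) * ↑(k + 1) = -↑(4 * (k + 1)) by push_cast; ring]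
  simp only [zpow_neg, zpow_natCast, Nat.add_sub_cancel, show (16 : ℝ) = 2 ^ 4 by norm_num,
    ← pow_mul]
  field_simp

theorem L2_discrepancy_sq_lower_bound_d (d N : ℕ) (hN : 2 ≤ N) (P : Finset (Fin d → ℝ))
    (hP : ↑P ⊆ Set.univ.pi (fun _ : Fin d => Set.Ico (0 : ℝ) 1)) (hcard : P.card = N) :
    (2 : ℝ) ^ (-(4 : ℤ) * d) * ((N : ℝ) * 2 ^ (-(Nat.clog 2 N : ℤ))) ^ 2 * (4 / 3) *
        (Nat.clog 2 N : ℝ) ^ (d - 1) / (Nat.factorial (d - 1)) -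
      (2 : ℝ) ^ (-(4 : ℤ) * d) * ((N : ℝ) * 2 ^ (-(Nat.clog 2 N : ℤ))) ^ 3 * (8 / 7) *
        (Nat.clog 2 N : ℝ) ^ (d - 1) / (Nat.factorial (d - 1))
      ≤ ∫ x in Set.univ.pi (fun _ : Fin d => Set.Ico (0 : ℝ) 1), (discrepancyD d N P x) ^ 2 :=
  L2_discrepancy_sq_lower_bound_d_general d N hN P hcard
end
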